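/- The map T : ℕ × C⟦0,t⟧ → C⟦0,t⟧, (g, s) ↦ (j ↦ 2*(max_{0 ≤ i ≤ j} s i - g)_+ - s j), is surjective, and for each x ∈ C⟦0,t⟧ with K = min_{0 ≤ j ≤ t} x j its preimage equals { (-K, s^r(x)) : K+1 ≤ r ≤ x t } ∪ { (g, s^K(x)) : g ≥ -K }, where the paths s^r(x), K ≤ r ≤ x t, are pairwise distinct and s^K(x) = -x. -/

import Mathlib

/-- Running maximum `max_{0 ≤ i ≤ j} s i`. -/
noncomputable def runMax (s : ℕ → ℤ) (j : ℕ) : ℤ :=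
  (Finset.range (j + 1)).sup' (Finset.nonempty_range_iff.mpr (Nat.succ_ne_zero j)) s

/-- Backward running minimum `K_j(x) = min_{j ≤ i ≤ t} x i` (for `j ≤ t`). -/
noncomputable def backMin (x : ℕ → ℤ) (t j : ℕ) : ℤ :=
  (Finset.Icc (min j t) t).inf' (Finset.nonempty_Icc.mpr (min_le_right j t)) x

/-- `x ∈ C⟦0,t⟧`: `x 0 = 0` and steps in `{-1,0,1}` up to time `t`. -/
def IsPath (t : ℕ) (x : ℕ → ℤ) : Prop :=
  x 0 = 0 ∧ ∀ j : ℕ, 1 ≤ j → j ≤ t → x j - x (j - 1) ∈ ({-1, 0, 1} : Set ℤ)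

/-- `T_g(s)_j = 2*(max_{0 ≤ i ≤ j} s i - g)₊ - s j`. -/
noncomputable def Tmap (g : ℕ) (s : ℕ → ℤ) (j : ℕ) : ℤ :=
  2 * max (runMax s j - (g : ℤ)) 0 - s j

/-- The path `s^r(x)_j = 2*(min(r, K_j(x)) - K) - x j`, where `K = K_0(x)`. -/
noncomputable def sr (x : ℕ → ℤ) (t : ℕ) (r : ℤ) (j : ℕ) : ℤ :=
  2 * (min r (backMin x t j) - backMin x t 0) - x j

/-! Write `M = runMax s` and `φ_j = max M_j g - 2g` (`tmapFloor`). Then `Tmap g s ≥ φ`, `φ` is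
nondecreasing, and `Tmap g s j = φ_j` whenever `φ` increases at `j + 1` (there `s` reaches a new
maximum from `s_j = M_j`). Backward induction from `t` gives `min φ_t K_j = φ_j`, which expresses
`s` through `x = Tmap g s` as `s^r(x)` with `r = φ_t`; comparing `K` with `-g` sorts the pair into
one of the two families.

Conversely `K_j` can only increase by an up-step of `x` from `x_j = K_j`, and at that step `s^r(x)`
reaches a new maximum; forward induction gives `max (runMax s^r(x))_j (-K) = min r K_j - 2K`,
which is `Tmap (-K) s^r(x) = x`. -/

section BackMin

variable (x : ℕ → ℤ) {t : ℕ}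

theorem le_backMin_iff {c : ℤ} {j : ℕ} (hj : j ≤ t) :
    c ≤ backMin x t j ↔ ∀ i, j ≤ i → i ≤ t → c ≤ x i := by
  simp [backMin, Finset.le_inf'_iff, min_eq_left hj]

theorem backMin_le {i j : ℕ} (hji : j ≤ i) (hit : i ≤ t) : backMin x t j ≤ x i :=
  (le_backMin_iff x (hji.trans hit)).mp le_rfl i hji hit

theorem backMin_self (t : ℕ) : backMin x t t = x t := by
  simp [backMin]

theorem backMin_eq_min_succ {j : ℕ} (hj : j < t) :
    backMin x t j = min (x j) (backMin x t (j + 1)) := by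
  have hIcc : Finset.Icc (min j t) t = insert j (Finset.Icc (min (j + 1) t) t) := by
    rw [min_eq_left hj.le, min_eq_left hj, Finset.insert_Icc_add_one_left_eq_Icc hj.le]
  rw [backMin, backMin]
  simp_rw [hIcc]
  rw [Finset.inf'_insert]

theorem backMin_mono {i j : ℕ} (hij : i ≤ j) (hjt : j ≤ t) : backMin x t i ≤ backMin x t j :=
  (le_backMin_iff x hjt).mpr fun _ hjk hkt => backMin_le x (hij.trans hjk) hkt

end BackMin

section RunMax

variable (s : ℕ → ℤ)

theorem le_runMax {i j : ℕ} (hij : i ≤ j) : s i ≤ runMax s j :=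
  Finset.le_sup' s (Finset.mem_range_succ_iff.mpr hij)

theorem runMax_le_iff {c : ℤ} {j : ℕ} : runMax s j ≤ c ↔ ∀ i ≤ j, s i ≤ c := by
  simp [runMax, Finset.sup'_le_iff]

theorem runMax_zero : runMax s 0 = s 0 := by
  simp [runMax]

theorem runMax_mono {i j : ℕ} (hij : i ≤ j) : runMax s i ≤ runMax s j :=
  (runMax_le_iff s).mpr fun _ hki => le_runMax s (hki.trans hij)

theorem runMax_succ (j : ℕ) : runMax s (j + 1) = max (runMax s j) (s (j + 1)) := by
  refine le_antisymm ((runMax_le_iff s).mpr fun i hi => ?_)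
    (max_le (runMax_mono s j.le_succ) (le_runMax s le_rfl))
  rcases Nat.le_succ_iff.mp hi with hij | rfl
  · exact le_max_of_le_left (le_runMax s hij)
  · exact le_max_right _ _

end RunMax

theorem Tmap_congr {g j : ℕ} {s s' : ℕ → ℤ} (h : ∀ i ≤ j, s i = s' i) :
    Tmap g s j = Tmap g s' j := by
  have : runMax s j = runMax s' j :=
    Finset.sup'_congr _ rfl fun i hi => h i (Finset.mem_range_succ_iff.mp hi)
  rw [Tmap, Tmap, this, h j le_rfl]

namespace IsPath

variable {t : ℕ} {x : ℕ → ℤ}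

theorem abs_sub_le_one (hx : IsPath t x) {j : ℕ} (hj : j < t) : |x (j + 1) - x j| ≤ 1 := by
  have := hx.2 (j + 1) (by omega) hj
  simp only [Nat.add_sub_cancel, Set.mem_insert_iff, Set.mem_singleton_iff] at this
  rcases this with h | h | h <;> simp [h]

theorem backMin_succ_cases (hx : IsPath t x) {j : ℕ} (hj : j < t) :
    backMin x t j = backMin x t (j + 1) ∨
      (backMin x t j = x j ∧ backMin x t (j + 1) = x (j + 1) ∧ x (j + 1) = x j + 1) := by
  have hmin := backMin_eq_min_succ x hj
  have hle : backMin x t (j + 1) ≤ x (j + 1) := backMin_le x le_rfl hj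
  have hstep := abs_le.mp (hx.abs_sub_le_one hj)
  omega

end IsPath

section Sr

variable {t : ℕ} {x : ℕ → ℤ}

theorem sr_backMin_zero {j : ℕ} (hj : j ≤ t) : sr x t (backMin x t 0) j = -x j := by
  rw [sr, min_eq_left (backMin_mono x j.zero_le hj)]
  ring

theorem sr_zero (hx : IsPath t x) {r : ℤ} (hr : backMin x t 0 ≤ r) : sr x t r 0 = 0 := by
  rw [sr, min_eq_right hr, hx.1]
  ring

theorem sr_isPath (hx : IsPath t x) {r : ℤ} (hr : backMin x t 0 ≤ r) : IsPath t (sr x t r) := by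
  refine ⟨sr_zero hx hr, fun j hj hjt => ?_⟩
  obtain ⟨i, rfl⟩ : ∃ i, j = i + 1 := ⟨j - 1, by omega⟩
  have hstep := abs_le.mp (hx.abs_sub_le_one (by omega : i < t))
  simp only [sr, Nat.add_sub_cancel, Set.mem_insert_iff, Set.mem_singleton_iff]
  rcases hx.backMin_succ_cases (by omega : i < t) with h | ⟨h₀, h₁, h₂⟩
  · rw [h]
    omega
  · rw [h₀, h₁, h₂]
    omega

theorem max_runMax_sr (hx : IsPath t x) {r : ℤ} (hr : backMin x t 0 ≤ r) {j : ℕ} (hj : j ≤ t) :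
    max (runMax (sr x t r) j) (-backMin x t 0) = min r (backMin x t j) - 2 * backMin x t 0 := by
  induction j with
  | zero =>
    have hK : backMin x t 0 ≤ 0 := hx.1 ▸ backMin_le x le_rfl t.zero_le
    rw [runMax_zero, sr_zero hx hr, min_eq_right hr]
    omega
  | succ i ih =>
    have hit : i < t := hj
    rw [runMax_succ, max_right_comm, ih hit.le]
    have hle : backMin x t (i + 1) ≤ x (i + 1) := backMin_le x le_rfl hit
    simp only [sr]
    rcases hx.backMin_succ_cases hit with h | ⟨h₀, h₁, h₂⟩
    · rw [h]
      omega
    · rw [h₀, h₁, h₂]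
      omega

theorem Tmap_sr (hx : IsPath t x) {r : ℤ} (hr : backMin x t 0 ≤ r) {g : ℕ}
    (hg : (g : ℤ) = -backMin x t 0) {j : ℕ} (hj : j ≤ t) : Tmap g (sr x t r) j = x j := by
  have h := max_runMax_sr hx hr hj
  have hmax : max (runMax (sr x t r) j - g) 0 = min r (backMin x t j) - backMin x t 0 := by
    rw [hg, sub_neg_eq_add, ← neg_add_cancel (backMin x t 0), max_add_add_right, h]
    ring
  rw [Tmap, hmax, sr]
  ring

theorem Tmap_sr_backMin_zero (hx : IsPath t x) {g : ℕ} (hg : -backMin x t 0 ≤ g) {j : ℕ}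
    (hj : j ≤ t) : Tmap g (sr x t (backMin x t 0)) j = x j := by
  have h := max_runMax_sr hx le_rfl hj
  rw [min_eq_left (backMin_mono x j.zero_le hj)] at h
  rw [Tmap, max_eq_right (by omega), sr_backMin_zero hj]
  ring

theorem sr_self {r : ℤ} (hr : r ≤ x t) : sr x t r t = 2 * (r - backMin x t 0) - x t := by
  rw [sr, backMin_self, min_eq_left hr]

end Sr

noncomputable def tmapFloor (g : ℕ) (s : ℕ → ℤ) (j : ℕ) : ℤ :=
  max (runMax s j) g - 2 * g

section TmapFloor

variable {g : ℕ} {s : ℕ → ℤ}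

theorem tmapFloor_mono {i j : ℕ} (hij : i ≤ j) : tmapFloor g s i ≤ tmapFloor g s j := by
  have := runMax_mono s hij
  simp only [tmapFloor]
  omega

theorem tmapFloor_zero (hs : s 0 = 0) : tmapFloor g s 0 = -g := by
  rw [tmapFloor, runMax_zero, hs, max_eq_right (Int.natCast_nonneg g)]
  ring

theorem tmapFloor_le_Tmap (j : ℕ) : tmapFloor g s j ≤ Tmap g s j := by
  have := le_runMax s (le_refl j)
  simp only [tmapFloor, Tmap]
  omega

theorem Tmap_eq_tmapFloor_of_lt {t : ℕ} (hs : IsPath t s) {j : ℕ} (hj : j < t)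
    (h : tmapFloor g s j < tmapFloor g s (j + 1)) : Tmap g s j = tmapFloor g s j := by
  have hstep := abs_le.mp (hs.abs_sub_le_one hj)
  have hmax := le_runMax s (le_refl j)
  simp only [tmapFloor, runMax_succ] at h
  simp only [Tmap, tmapFloor]
  omega

variable {t : ℕ} {x : ℕ → ℤ}

theorem neg_le_backMin_of_Tmap_eq (hs : s 0 = 0) (hx : ∀ j ≤ t, Tmap g s j = x j) :
    -(g : ℤ) ≤ backMin x t 0 :=
  (le_backMin_iff x t.zero_le).mpr fun i _ hi =>
    calc -(g : ℤ) = tmapFloor g s 0 := (tmapFloor_zero hs).symm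
      _ ≤ tmapFloor g s i := tmapFloor_mono i.zero_le
      _ ≤ x i := hx i hi ▸ tmapFloor_le_Tmap i

theorem min_tmapFloor_backMin (hs : IsPath t s) (hx : ∀ j ≤ t, Tmap g s j = x j) {j : ℕ}
    (hj : j ≤ t) : min (tmapFloor g s t) (backMin x t j) = tmapFloor g s j := by
  induction hj using Nat.decreasingInduction with
  | self => rw [backMin_self, ← hx t le_rfl, min_eq_left (tmapFloor_le_Tmap t)]
  | of_succ i hi ih =>
    have hfloor := tmapFloor_le_Tmap (g := g) (s := s) i
    have hmono := tmapFloor_mono (g := g) (s := s) i.le_succ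
    rw [backMin_eq_min_succ x hi, ← min_assoc, min_comm _ (x i), min_assoc, ih, ← hx i hi.le]
    rcases hmono.lt_or_eq with hlt | heq
    · rw [Tmap_eq_tmapFloor_of_lt hs hi hlt, min_eq_left hlt.le]
    · rw [← heq, min_eq_right hfloor]

end TmapFloor

theorem Tmap_preimage_cases {t g : ℕ} {x s : ℕ → ℤ} (hs : IsPath t s)
    (hx : ∀ j ≤ t, Tmap g s j = x j) :
    ((g : ℤ) = -backMin x t 0 ∧
        ∃ r : ℤ, backMin x t 0 + 1 ≤ r ∧ r ≤ x t ∧ ∀ j ≤ t, s j = sr x t r j) ∨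
      (-backMin x t 0 ≤ (g : ℤ) ∧ ∀ j ≤ t, s j = sr x t (backMin x t 0) j) := by
  set r := tmapFloor g s t
  have hs_eq : ∀ j ≤ t, s j = 2 * (min r (backMin x t j) + g) - x j := fun j hj => by
    rw [min_tmapFloor_backMin hs hx hj, ← hx j hj, Tmap, tmapFloor]
    omega
  have hr_le : r ≤ x t := hx t le_rfl ▸ tmapFloor_le_Tmap t
  have hr_ge : -(g : ℤ) ≤ r := tmapFloor_zero (g := g) hs.1 ▸ tmapFloor_mono t.zero_le
  rcases (neg_le_backMin_of_Tmap_eq hs.1 hx).eq_or_lt with hK | hK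
  · have hs_sr : ∀ j ≤ t, s j = sr x t r j := fun j hj => by
      rw [hs_eq j hj, sr, ← hK]
      ring
    rcases hr_ge.eq_or_lt with hr | hr
    · exact .inr ⟨by omega, by rwa [← hK, hr]⟩
    · exact .inl ⟨by omega, r, by omega, hr_le, hs_sr⟩
  · -- at `j = 0` the identity `min r K_j = tmapFloor g s j` forces `r = -g`
    have hr : r = -g := by
      have := min_tmapFloor_backMin hs hx t.zero_le
      rw [tmapFloor_zero hs.1] at this
      omega
    refine .inr ⟨by omega, fun j hj => ?_⟩
    have hKj := backMin_mono x j.zero_le hj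
    rw [hs_eq j hj, sr_backMin_zero hj, hr, min_eq_left (by omega)]
    ring

/-- The map `T : ℕ × C⟦0,t⟧ → C⟦0,t⟧` is surjective; the preimage of `x` (with
`K = min_{0≤j≤t} x j`) is `{(-K, s^r(x)) : K+1 ≤ r ≤ x t} ∪ {(g, s^K(x)) : g ≥ -K}`;
the paths `s^r(x)`, `K ≤ r ≤ x t`, are pairwise distinct, and `s^K(x) = -x`. -/
theorem Tmap_surjective_and_preimage (t : ℕ) (x : ℕ → ℤ) (hx : IsPath t x) :
    (∃ (g : ℕ) (s : ℕ → ℤ), IsPath t s ∧ ∀ j ≤ t, Tmap g s j = x j) ∧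
    (∀ (g : ℕ) (s : ℕ → ℤ), IsPath t s →
      ((∀ j ≤ t, Tmap g s j = x j) ↔
        (((g : ℤ) = -(backMin x t 0) ∧
            ∃ r : ℤ, backMin x t 0 + 1 ≤ r ∧ r ≤ x t ∧ ∀ j ≤ t, s j = sr x t r j) ∨
         (-(backMin x t 0) ≤ (g : ℤ) ∧ ∀ j ≤ t, s j = sr x t (backMin x t 0) j)))) ∧
    (∀ r₁ r₂ : ℤ, backMin x t 0 ≤ r₁ → r₁ ≤ x t → backMin x t 0 ≤ r₂ → r₂ ≤ x t →
      r₁ ≠ r₂ → ∃ j ≤ t, sr x t r₁ j ≠ sr x t r₂ j) ∧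
    (∀ j ≤ t, sr x t (backMin x t 0) j = -x j) := by
  have hK : backMin x t 0 ≤ 0 := hx.1 ▸ backMin_le x le_rfl t.zero_le
  refine ⟨⟨(-backMin x t 0).toNat, sr x t (backMin x t 0), sr_isPath hx le_rfl,
      fun j hj => Tmap_sr_backMin_zero hx (by omega) hj⟩,
    fun g s hs => ⟨Tmap_preimage_cases hs, ?_⟩, ?_, fun j hj => sr_backMin_zero hj⟩
  · rintro (⟨hg, r, hr, -, hs_sr⟩ | ⟨hg, hs_sr⟩) j hj
    · rw [Tmap_congr fun i hi => hs_sr i (hi.trans hj)]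
      exact Tmap_sr hx (by omega) hg hj
    · rw [Tmap_congr fun i hi => hs_sr i (hi.trans hj)]
      exact Tmap_sr_backMin_zero hx hg hj
  · intro r₁ r₂ _ h₁ _ h₂ hne
    refine ⟨t, le_rfl, fun h => hne ?_⟩
    rw [sr_self h₁, sr_self h₂] at h
    omega
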